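/- Given an input–output table {(σ_1, v_1), ..., (σ_n, v_n)} of evaluation contexts and untagged values, the set ℓ(w(σ_1,v_1) * ⋯ * w(σ_n,v_n)) equals exactly the set of linear expressions that evaluate to v_i in context σ_i for every i = 1, ..., n; in particular, this set is finite and computable. -/

import Mathlib

/-- Linear expressions over `n` variables: trees built from variables `x i` and
constructor applications `c(e₁,...,e_k)` (constructors named by naturals). -/
inductive LinExpr (n : ℕ) : Type
  | var : Fin n → LinExpr n
  | cons : ℕ → List (LinExpr n) → LinExpr n

/-- Tagged trees (ℓ-values): each node carries a constructor symbol and a tag,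
a finite subset of `{∘, 1, ..., n}` modelled as `Finset (Option (Fin n))`
(`none` playing the role of `∘`). -/
inductive TaggedTree (n : ℕ) : Type
  | node : ℕ → Finset (Option (Fin n)) → List (TaggedTree n) → TaggedTree n

/-- Membership in the set `ℓ(w)` of linear expressions extracted from a tagged tree:
`ℓ(c^A(w₁,...,w_k)) = {x i | i ∈ A} ∪ ({c(e₁,...,e_k) | e_i ∈ ℓ(w_i)} if ∘ ∈ A else ∅)`. -/
inductive EllMem {n : ℕ} : LinExpr n → TaggedTree n → Prop
  | var {i : Fin n} {c A ws} (hi : some i ∈ A) :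
      EllMem (.var i) (.node c A ws)
  | cons {c A ws es} (hc : none ∈ A) (hes : List.Forall₂ EllMem es ws) :
      EllMem (.cons c es) (.node c A ws)

/-- The set `ℓ(w)` of linear expressions extracted from a tagged tree `w`. -/
def ell {n : ℕ} (w : TaggedTree n) : Set (LinExpr n) := {e | EllMem e w}
/-- Untagged values: finite trees of constructor applications. -/
inductive UVal : Type
  | node : ℕ → List UVal → UVal

mutual
/-- Evaluation of a linear expression in a context `σ` assigning values to variables:
each variable `x i` is replaced by `σ i`. -/
def evalLin {n : ℕ} (σ : Fin n → UVal) : LinExpr n → UVal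
  | .var i => σ i
  | .cons c es => .node c (evalLinList σ es)

/-- Pointwise evaluation of a list of linear expressions (i.e. `List.map (evalLin σ)`). -/
def evalLinList {n : ℕ} (σ : Fin n → UVal) : List (LinExpr n) → List UVal
  | [] => []
  | e :: es => evalLin σ e :: evalLinList σ es
end

mutual
/-- The tagging function `w(σ, v)`: the node `c(v₁,...,v_k)` receives the tag
`{∘} ∪ {i | σ(x i) = c(v₁,...,v_k)}` and the children are tagged recursively. -/
noncomputable def wTag {n : ℕ} (σ : Fin n → UVal) : UVal → TaggedTree n
  | .node c vs =>
      .node c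
        (open scoped Classical in
          insert none ((Finset.univ.filter (fun i : Fin n => σ i = UVal.node c vs)).image some))
        (wTagList σ vs)

/-- Pointwise tagging of a list of values (i.e. `List.map (wTag σ)`). -/
noncomputable def wTagList {n : ℕ} (σ : Fin n → UVal) : List UVal → List (TaggedTree n)
  | [] => []
  | v :: vs => wTag σ v :: wTagList σ vs
end

mutual
/-- The intersection operation `w₁ * w₂` on tagged trees:
`c₁^A(w₁s) * c₂^B(w₂s)` is `c₁^{A∩B}(zipWith (*) w₁s w₂s)` when `c₁ = c₂`,
and `c₁^{(A∩B)\{∘}}(w₁s)` otherwise. -/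
def star {n : ℕ} : TaggedTree n → TaggedTree n → TaggedTree n
  | .node c₁ A ws₁, .node c₂ B ws₂ =>
      if c₁ = c₂ then .node c₁ (A ∩ B) (starList ws₁ ws₂)
      else .node c₁ ((A ∩ B).erase none) ws₁

/-- Pointwise `star` on lists (i.e. `List.zipWith star`). -/
def starList {n : ℕ} : List (TaggedTree n) → List (TaggedTree n) → List (TaggedTree n)
  | w₁ :: t₁, w₂ :: t₂ => star w₁ w₂ :: starList t₁ t₂
  | _, _ => []
end

/-- Well-formedness of a value with respect to an arity assignment `ar`: every node
labeled `c` has exactly `ar c` children. -/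
inductive UValWF (ar : ℕ → ℕ) : UVal → Prop
  | node {c vs} (hlen : vs.length = ar c) (hvs : ∀ v ∈ vs, UValWF ar v) :
      UValWF ar (.node c vs)

/-!
The tag of a node of `w(σ, v)` records exactly which variables evaluate under `σ` to the value
at that node, so `ℓ(w(σ, v))` is the set of expressions evaluating to `v` under `σ`. For trees
in which each constructor always has the same number of children, `*` is the intersection at
the level of extracted sets, `ℓ(w₁ * w₂) = ℓ(w₁) ∩ ℓ(w₂)`, and it preserves that shape
condition; folding `*` over the table therefore yields the common solution set. Finiteness
holds for `ℓ` of every tagged tree: a node contributes at most `n` variables and one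
constructor application per choice of extracted children.
-/

section

variable {n : ℕ}

theorem LinExpr.induction_mem {P : LinExpr n → Prop} (var : ∀ i, P (.var i))
    (cons : ∀ c es, (∀ e ∈ es, P e) → P (.cons c es)) : ∀ e, P e
  | .var i => var i
  | .cons c es => cons c es fun e _ => LinExpr.induction_mem var cons e

theorem TaggedTree.induction_mem {P : TaggedTree n → Prop}
    (node : ∀ c A ws, (∀ w ∈ ws, P w) → P (.node c A ws)) : ∀ w, P w
  | .node c A ws => node c A ws fun w _ => TaggedTree.induction_mem node w

theorem UVal.induction_mem {P : UVal → Prop}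
    (node : ∀ c vs, (∀ v ∈ vs, P v) → P (.node c vs)) : ∀ v, P v
  | .node c vs => node c vs fun v _ => UVal.induction_mem node v

theorem evalLinList_eq_map (σ : Fin n → UVal) :
    ∀ es : List (LinExpr n), evalLinList σ es = es.map (evalLin σ)
  | [] => rfl
  | e :: es => by rw [evalLinList, List.map_cons, evalLinList_eq_map]

theorem wTagList_eq_map (σ : Fin n → UVal) :
    ∀ vs : List UVal, wTagList (n := n) σ vs = vs.map (wTag σ)
  | [] => rfl
  | v :: vs => by rw [wTagList, List.map_cons, wTagList_eq_map]

theorem starList_eq_zipWith :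
    ∀ ws₁ ws₂ : List (TaggedTree n), starList ws₁ ws₂ = List.zipWith star ws₁ ws₂
  | [], [] | [], _ :: _ | _ :: _, [] => rfl
  | w₁ :: t₁, w₂ :: t₂ => by rw [starList, List.zipWith_cons_cons, starList_eq_zipWith]

theorem star_node (c₁ : ℕ) (A : Finset (Option (Fin n))) (ws₁ : List (TaggedTree n))
    (c₂ : ℕ) (B : Finset (Option (Fin n))) (ws₂ : List (TaggedTree n)) :
    star (.node c₁ A ws₁) (.node c₂ B ws₂) =
      if c₁ = c₂ then .node c₁ (A ∩ B) (List.zipWith star ws₁ ws₂)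
      else .node c₁ ((A ∩ B).erase none) ws₁ := by
  rw [← starList_eq_zipWith]
  rfl

theorem ellMem_var_iff {i : Fin n} {c : ℕ} {A : Finset (Option (Fin n))}
    {ws : List (TaggedTree n)} : EllMem (.var i) (.node c A ws) ↔ some i ∈ A :=
  ⟨fun h => by cases h; assumption, EllMem.var⟩

theorem ellMem_cons_iff {c c' : ℕ} {es : List (LinExpr n)} {A : Finset (Option (Fin n))}
    {ws : List (TaggedTree n)} :
    EllMem (.cons c es) (.node c' A ws) ↔ c = c' ∧ none ∈ A ∧ List.Forall₂ EllMem es ws := by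
  constructor
  · intro h
    cases h with
    | cons hA hes => exact ⟨rfl, hA, hes⟩
  · rintro ⟨rfl, hA, hes⟩
    exact .cons hA hes

namespace List

variable {α β : Type*} {R S : α → β → Prop}

theorem forall₂_congr_of_mem {l₁ : List α} {l₂ : List β}
    (h : ∀ a ∈ l₁, ∀ b ∈ l₂, R a b ↔ S a b) : Forall₂ R l₁ l₂ ↔ Forall₂ S l₁ l₂ := by
  simp only [forall₂_iff_zip]
  refine and_congr_right fun _ => forall₂_congr fun a b => imp_congr_right fun hab => ?_
  exact h a (of_mem_zip hab).1 b (of_mem_zip hab).2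

theorem forall₂_zipWith_iff {f : β → β → β} :
    ∀ {l : List α} {l₁ l₂ : List β}, l₁.length = l₂.length →
      (∀ a ∈ l, ∀ b₁ ∈ l₁, ∀ b₂ ∈ l₂, R a (f b₁ b₂) ↔ R a b₁ ∧ R a b₂) →
      (Forall₂ R l (zipWith f l₁ l₂) ↔ Forall₂ R l l₁ ∧ Forall₂ R l l₂)
  | [], [], [], _, _ | [], _ :: _, _ :: _, _, _ | _ :: _, [], [], _, _ => by simp
  | _, [], _ :: _, hlen, _ | _, _ :: _, [], hlen, _ => by simp at hlen
  | a :: l, b₁ :: l₁, b₂ :: l₂, hlen, h => by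
    have htail := forall₂_zipWith_iff (l := l) (by simpa using hlen)
      fun a ha b₁ hb₁ b₂ hb₂ => h a (mem_cons_of_mem _ ha) b₁ (mem_cons_of_mem _ hb₁) b₂
        (mem_cons_of_mem _ hb₂)
    simp only [zipWith_cons_cons, forall₂_cons, htail,
      h a mem_cons_self b₁ mem_cons_self b₂ mem_cons_self]
    tauto

theorem finite_setOf_forall₂ :
    ∀ {l : List β}, (∀ b ∈ l, {a | R a b}.Finite) → {u | Forall₂ R u l}.Finite
  | [], _ => by simp [forall₂_nil_right_iff]
  | b :: l, h => by
    refine ((h b mem_cons_self).image2 cons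
      (finite_setOf_forall₂ fun b' hb' => h b' (mem_cons_of_mem _ hb'))).subset ?_
    intro u hu
    cases hu with
    | cons hab hu => exact ⟨_, hab, _, hu, rfl⟩

end List

theorem ell_wTag (σ : Fin n → UVal) (v : UVal) : ell (wTag σ v) = {e | evalLin σ e = v} := by
  ext e
  revert v
  induction e using LinExpr.induction_mem with
  | var i =>
    rintro ⟨c, vs⟩
    simp [ell, wTag, ellMem_var_iff, evalLin]
  | cons c es ih =>
    rintro ⟨c', vs⟩
    have hchildren : List.Forall₂ EllMem es (vs.map (wTag σ)) ↔ es.map (evalLin σ) = vs := by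
      rw [List.forall₂_map_right_iff, ← List.forall₂_eq_eq_eq, List.forall₂_map_left_iff]
      exact List.forall₂_congr_of_mem fun e he v _ => ih e he v
    simp [ell, wTag, ellMem_cons_iff, evalLin, wTagList_eq_map, evalLinList_eq_map, hchildren]

/-- `star` zips children with the truncating `List.zipWith`, so without equal arities
`ℓ(w₁ * w₂) = ℓ(w₁) ∩ ℓ(w₂)` fails. -/
inductive TaggedTreeWF (ar : ℕ → ℕ) : TaggedTree n → Prop
  | node {c A ws} (hlen : ws.length = ar c) (hws : ∀ w ∈ ws, TaggedTreeWF ar w) :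
      TaggedTreeWF ar (.node c A ws)

variable {ar : ℕ → ℕ}

theorem taggedTreeWF_wTag (σ : Fin n → UVal) {v : UVal} (hv : UValWF ar v) :
    TaggedTreeWF ar (wTag σ v) := by
  induction v using UVal.induction_mem with
  | node c vs ih =>
    obtain ⟨hlen, hvs⟩ := hv
    rw [wTag, wTagList_eq_map]
    refine .node (by rwa [List.length_map]) ?_
    simp only [List.mem_map, forall_exists_index, and_imp, forall_apply_eq_imp_iff₂]
    exact fun v hv => ih v hv (hvs v hv)

theorem TaggedTreeWF.star {w₁ w₂ : TaggedTree n} (h₁ : TaggedTreeWF ar w₁)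
    (h₂ : TaggedTreeWF ar w₂) : TaggedTreeWF ar (star w₁ w₂) := by
  induction w₁ using TaggedTree.induction_mem generalizing w₂ with
  | node c₁ A ws₁ ih =>
    obtain ⟨hlen₁, hws₁⟩ := h₁
    obtain ⟨hlen₂, hws₂⟩ := h₂
    rw [star_node]
    split_ifs with hc
    · subst hc
      refine .node (by rw [List.length_zipWith, hlen₁, hlen₂, min_self]) ?_
      rw [← List.map_uncurry_zip_eq_zipWith]
      simp only [List.mem_map, Prod.exists, Function.uncurry_apply_pair, forall_exists_index,
        and_imp]
      rintro _ a b hab rfl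
      obtain ⟨ha, hb⟩ := List.of_mem_zip hab
      exact ih a ha (hws₁ a ha) (hws₂ b hb)
    · exact .node hlen₁ hws₁

theorem ell_star {w₁ w₂ : TaggedTree n} (h₁ : TaggedTreeWF ar w₁) (h₂ : TaggedTreeWF ar w₂) :
    ell (star w₁ w₂) = ell w₁ ∩ ell w₂ := by
  ext e
  revert w₁ w₂
  induction e using LinExpr.induction_mem with
  | var i =>
    rintro ⟨c₁, A, ws₁⟩ ⟨c₂, B, ws₂⟩ - -
    simp only [ell, star_node, Set.mem_ofPred_eq, Set.mem_inter_iff]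
    split_ifs <;> simp [ellMem_var_iff]
  | cons c es ih =>
    rintro ⟨c₁, A, ws₁⟩ ⟨c₂, B, ws₂⟩ ⟨hlen₁, hws₁⟩ ⟨hlen₂, hws₂⟩
    simp only [ell, star_node, Set.mem_ofPred_eq, Set.mem_inter_iff] at ih ⊢
    split_ifs with hc
    · subst hc
      have hchildren := List.forall₂_zipWith_iff (R := EllMem) (hlen₁.trans hlen₂.symm)
        fun e he w₁ hw₁ w₂ hw₂ => ih e he (hws₁ w₁ hw₁) (hws₂ w₂ hw₂)
      simp only [ellMem_cons_iff, hchildren, Finset.mem_inter]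
      tauto
    · simp only [ellMem_cons_iff, Finset.mem_erase, ne_eq, not_true_eq_false, false_and,
        and_false, false_iff, not_and]
      rintro ⟨rfl, -⟩ rfl
      exact absurd rfl hc

theorem ell_finite (w : TaggedTree n) : (ell w).Finite := by
  induction w using TaggedTree.induction_mem with
  | node c A ws ih =>
    refine ((Set.finite_range LinExpr.var).union
      ((List.finite_setOf_forall₂ ih).image (LinExpr.cons c))).subset ?_
    intro e he
    cases he with
    | var => exact .inl ⟨_, rfl⟩
    | cons _ hes => exact .inr ⟨_, hes, rfl⟩

theorem ell_foldl_star_wTag (T : List ((Fin n → UVal) × UVal)) (hT : ∀ p ∈ T, UValWF ar p.2)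
    {w : TaggedTree n} (hw : TaggedTreeWF ar w) :
    ell (T.foldl (fun w p => star w (wTag p.1 p.2)) w) =
      ell w ∩ {e | ∀ p ∈ T, evalLin p.1 e = p.2} := by
  induction T generalizing w with
  | nil => simp
  | cons p T ih =>
    have hp := taggedTreeWF_wTag p.1 (hT p List.mem_cons_self)
    rw [List.foldl_cons, ih (fun q hq => hT q (List.mem_cons_of_mem _ hq)) (hw.star hp),
      ell_star hw hp, ell_wTag]
    ext e
    simp only [Set.mem_inter_iff, Set.mem_ofPred_eq, List.forall_mem_cons, and_assoc]

end

/-- Given a (nonempty) input–output table `(σ₁, v₁), ..., (σ_N, v_N)` of evaluation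
contexts and well-formed untagged values, the set
`ℓ(w(σ₁,v₁) * ⋯ * w(σ_N,v_N))` is exactly the set of linear expressions that evaluate
to `v_i` in context `σ_i` for every `i`; in particular, this set is finite. -/
theorem ell_star_fold_wTag {n : ℕ} (ar : ℕ → ℕ)
    (σ₁ : Fin n → UVal) (v₁ : UVal) (T : List ((Fin n → UVal) × UVal))
    (h₁ : UValWF ar v₁) (hT : ∀ p ∈ T, UValWF ar p.2) :
    ell (T.foldl (fun w p => star w (wTag p.1 p.2)) (wTag σ₁ v₁)) =
        {e : LinExpr n | evalLin σ₁ e = v₁ ∧ ∀ p ∈ T, evalLin p.1 e = p.2} ∧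
      (ell (T.foldl (fun w p => star w (wTag p.1 p.2)) (wTag σ₁ v₁))).Finite := by
  refine ⟨?_, ell_finite _⟩
  rw [ell_foldl_star_wTag T hT (taggedTreeWF_wTag σ₁ h₁), ell_wTag]
  rfl
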